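/- Let G = K[a_1,b_1] × ··· × K[a_t,b_t] with 2 ≤ b_1 ≤ ··· ≤ b_t. Then the upper irredundance number satisfies IR(G) ≤ (b_1/(2b_1 - 1))·∏_{i=1}^t a_i b_i. -/

import Mathlib

open SimpleGraph

def unitaryCayley (n : ℕ) : SimpleGraph (ZMod n) where
  Adj a b := a ≠ b ∧ IsUnit (a - b)
  symm := by
    constructor
    rintro a b ⟨h1, h2⟩
    refine ⟨h1.symm, ?_⟩
    rw [← neg_sub]
    exact h2.neg
  loopless := by constructor; rintro a ⟨h, _⟩; exact h rfl

def tensorProd {α β : Type*} (G : SimpleGraph α) (H : SimpleGraph β) :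
    SimpleGraph (α × β) where
  Adj x y := G.Adj x.1 y.1 ∧ H.Adj x.2 y.2
  symm := by constructor; rintro x y ⟨h1, h2⟩; exact ⟨h1.symm, h2.symm⟩
  loopless := by constructor; rintro x ⟨h, _⟩; exact G.loopless.irrefl _ h

def tensorPi {ι : Type*} {α : ι → Type*} (G : ∀ i, SimpleGraph (α i)) :
    SimpleGraph (∀ i, α i) where
  Adj x y := x ≠ y ∧ ∀ i, (G i).Adj (x i) (y i)
  symm := by constructor; rintro x y ⟨h1, h2⟩; exact ⟨h1.symm, fun i => (h2 i).symm⟩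
  loopless := by constructor; rintro x ⟨h, _⟩; exact h rfl

/-- The balanced complete multipartite graph `K[a,b]`: `b` parts of size `a`. -/
def multipartite (a b : ℕ) : SimpleGraph (Fin a × Fin b) where
  Adj x y := x.2 ≠ y.2
  symm := by constructor; rintro x y h; exact h.symm
  loopless := by constructor; rintro x h; exact h rfl

def prodComplete2 (n1 n2 : ℕ) : SimpleGraph (Fin n1 × Fin n2) :=
  tensorProd (completeGraph (Fin n1)) (completeGraph (Fin n2))

def prodComplete3 (n1 n2 n3 : ℕ) : SimpleGraph (Fin n1 × Fin n2 × Fin n3) :=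
  tensorProd (completeGraph (Fin n1)) (prodComplete2 n2 n3)

def prodCompletePi (t : ℕ) (n : Fin t → ℕ) : SimpleGraph (∀ i, Fin (n i)) :=
  tensorPi fun i => completeGraph (Fin (n i))

def prodMultipartite (t : ℕ) (a b : Fin t → ℕ) :
    SimpleGraph (∀ i, Fin (a i) × Fin (b i)) :=
  tensorPi fun i => multipartite (a i) (b i)

def IsDominating {V : Type*} (G : SimpleGraph V) (S : Set V) : Prop :=
  ∀ v, v ∈ S ∨ ∃ u ∈ S, G.Adj u v

def IsTotalDominating {V : Type*} (G : SimpleGraph V) (S : Set V) : Prop :=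
  ∀ v, ∃ u ∈ S, G.Adj u v

def IsIndep {V : Type*} (G : SimpleGraph V) (S : Set V) : Prop :=
  ∀ u ∈ S, ∀ v ∈ S, ¬ G.Adj u v

def closedNbhd {V : Type*} (G : SimpleGraph V) (v : V) : Set V :=
  {u | u = v ∨ G.Adj v u}

def IsIrredundant {V : Type*} (G : SimpleGraph V) (S : Set V) : Prop :=
  ∀ v ∈ S, ∃ u ∈ closedNbhd G v, ∀ w ∈ S, w ≠ v → u ∉ closedNbhd G w

noncomputable def domNum {V : Type*} (G : SimpleGraph V) : ℕ :=
  sInf {k | ∃ S : Set V, IsDominating G S ∧ S.ncard = k}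

noncomputable def totalDomNum {V : Type*} (G : SimpleGraph V) : ℕ :=
  sInf {k | ∃ S : Set V, IsTotalDominating G S ∧ S.ncard = k}

noncomputable def irNum {V : Type*} (G : SimpleGraph V) : ℕ :=
  sInf {k | ∃ S : Set V, Maximal (IsIrredundant G) S ∧ S.ncard = k}

noncomputable def iNum {V : Type*} (G : SimpleGraph V) : ℕ :=
  sInf {k | ∃ S : Set V, Maximal (IsIndep G) S ∧ S.ncard = k}

noncomputable def alphaNum {V : Type*} (G : SimpleGraph V) : ℕ :=
  sSup {k | ∃ S : Set V, IsIndep G S ∧ S.ncard = k}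

noncomputable def upperDomNum {V : Type*} (G : SimpleGraph V) : ℕ :=
  sSup {k | ∃ S : Set V, Minimal (IsDominating G) S ∧ S.ncard = k}

noncomputable def IRNum {V : Type*} (G : SimpleGraph V) : ℕ :=
  sSup {k | ∃ S : Set V, IsIrredundant G S ∧ S.ncard = k}

/-- The Jacobsthal function: least `m > 0` such that any `m` consecutive integers
contain one coprime to `n`. -/
noncomputable def jacobsthal (n : ℕ) : ℕ :=
  sInf {m | 0 < m ∧ ∀ x : ℤ, ∃ i : ℕ, i < m ∧ Int.gcd (x + i) n = 1}


/-!
`K[a,b]` is `a(b-1)`-regular and a direct product of regular graphs is regular, with the product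
of the degrees, so `G` is regular of positive degree. In such a graph every irredundant set `S`
has `2|S| ≤ |V|`. The vertices `A ⊆ S` with no neighbour in `S` have, by double counting the
edges leaving `A`, at least `|A|` neighbours, all outside `S`. Every other vertex of `S` has a
private neighbour outside `S`. These private neighbours are distinct and are not neighbours of
`A`. The theorem follows because `1/2 ≤ b₁/(2b₁ - 1)`.
-/

open Finset

variable {V : Type*} {G : SimpleGraph V}

theorem SimpleGraph.IsRegularOfDegree.card_le_card_biUnion_neighborFinset [DecidableEq V]
    [G.LocallyFinite] {d : ℕ} (hG : G.IsRegularOfDegree d) (hd : 0 < d) (A : Finset V) :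
    #A ≤ #(A.biUnion fun v => G.neighborFinset v) := by
  classical
  refine Nat.le_of_mul_le_mul_right (card_mul_le_card_mul G.Adj (m := d) (n := d) ?_ ?_) hd
  · intro v hv
    rw [← hG.degree_eq v, ← card_neighborFinset_eq_degree]
    refine card_le_card fun u hu => (mem_bipartiteAbove _).2 ⟨mem_biUnion.2 ⟨v, hv, hu⟩, ?_⟩
    exact (mem_neighborFinset G v u).1 hu
  · intro u _
    rw [← hG.degree_eq u, ← card_neighborFinset_eq_degree]
    refine card_le_card fun v hv => (mem_neighborFinset G u v).2 ?_
    exact ((mem_bipartiteBelow _).1 hv).2.symm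

theorem IsIrredundant.two_mul_card_le [Fintype V] [DecidableEq V] [DecidableRel G.Adj] {d : ℕ}
    (hG : G.IsRegularOfDegree d) (hd : 0 < d) {S : Finset V} (hS : IsIrredundant G S) :
    2 * #S ≤ Fintype.card V := by
  choose! p hp_nbhd hp_priv using hS
  set A := S.filter fun v => ∀ w ∈ S, ¬ G.Adj w v
  set N := A.biUnion fun v => G.neighborFinset v
  have hAS : A ⊆ S := filter_subset _ _
  have hNS : Disjoint N S := by
    refine disjoint_left.2 fun u hu huS => ?_
    obtain ⟨v, hvA, hvu⟩ := mem_biUnion.1 hu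
    exact (mem_filter.1 hvA).2 u huS ((mem_neighborFinset G v u).1 hvu).symm
  have hp_out : ∀ v ∈ S \ A, p v ∈ (S ∪ N)ᶜ := by
    intro v hv
    obtain ⟨hvS, hvA⟩ := mem_sdiff.1 hv
    obtain ⟨w, hwS, hwv⟩ : ∃ w ∈ S, G.Adj w v := by simpa [A, hvS] using hvA
    have hpv : G.Adj v (p v) := by
      refine (hp_nbhd v hvS).resolve_left fun h => ?_
      exact hp_priv v hvS w hwS (G.ne_of_adj hwv) (by rw [h]; exact Or.inr hwv)
    simp only [mem_compl, mem_union, not_or]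
    refine ⟨fun hpS => hp_priv v hvS (p v) hpS (G.ne_of_adj hpv).symm (Or.inl rfl),
      fun hpN => ?_⟩
    obtain ⟨x, hxA, hxp⟩ := mem_biUnion.1 hpN
    exact hp_priv v hvS x (hAS hxA) (ne_of_mem_of_not_mem hxA hvA)
      (Or.inr ((mem_neighborFinset G x (p v)).1 hxp))
  have hp_inj : Set.InjOn p S := by
    intro v hv w hw hpvw
    by_contra hne
    exact hp_priv v hv w hw (Ne.symm hne) (hpvw ▸ hp_nbhd w hw)
  have hB := card_le_card_of_injOn p hp_out (hp_inj.mono sdiff_subset)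
  have hAN : #A ≤ #N := hG.card_le_card_biUnion_neighborFinset hd A
  rw [card_compl, card_union_of_disjoint hNS.symm, card_sdiff_of_subset hAS] at hB
  have hSV := card_le_univ (S ∪ N)
  rw [card_union_of_disjoint hNS.symm] at hSV
  omega

theorem two_mul_IRNum_le_card [Fintype V] [DecidableRel G.Adj] {d : ℕ}
    (hG : G.IsRegularOfDegree d) (hd : 0 < d) : 2 * IRNum G ≤ Fintype.card V := by
  classical
  have hempty : IsIrredundant G ∅ := fun v hv => absurd hv (Set.notMem_empty v)
  rw [mul_comm, ← Nat.le_div_iff_mul_le two_pos]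
  refine csSup_le ⟨0, ∅, hempty, Set.ncard_empty V⟩ ?_
  rintro _ ⟨S, hS, rfl⟩
  rw [Nat.le_div_iff_mul_le two_pos, mul_comm, Set.ncard_eq_toFinset_card']
  exact IsIrredundant.two_mul_card_le hG hd (by simpa using hS)

def tensorPiNeighborSetEquiv {ι : Type*} [Nonempty ι] {α : ι → Type*}
    (G : ∀ i, SimpleGraph (α i)) (x : ∀ i, α i) :
    (tensorPi G).neighborSet x ≃ ∀ i, (G i).neighborSet (x i) where
  toFun y i := ⟨y.1 i, y.2.2 i⟩
  invFun f := ⟨fun i => f i, fun h =>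
    (G (Classical.arbitrary ι)).ne_of_adj (f _).2 (congrFun h _), fun i => (f i).2⟩
  left_inv _ := rfl
  right_inv _ := rfl

theorem isRegularOfDegree_tensorPi {ι : Type*} [Fintype ι] [Nonempty ι] {α : ι → Type*}
    {G : ∀ i, SimpleGraph (α i)} [∀ i, (G i).LocallyFinite] [(tensorPi G).LocallyFinite]
    {d : ι → ℕ} (hG : ∀ i, (G i).IsRegularOfDegree (d i)) :
    (tensorPi G).IsRegularOfDegree (∏ i, d i) := by
  classical
  intro x
  rw [← card_neighborSet_eq_degree, Fintype.card_congr (tensorPiNeighborSetEquiv G x),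
    Fintype.card_pi]
  exact prod_congr rfl fun i _ => by rw [card_neighborSet_eq_degree, (hG i).degree_eq]

def multipartiteNeighborSetEquiv (a b : ℕ) (x : Fin a × Fin b) :
    (multipartite a b).neighborSet x ≃ Fin a × {c : Fin b // c ≠ x.2} where
  toFun y := (y.1.1, ⟨y.1.2, fun h => y.2 h.symm⟩)
  invFun p := ⟨(p.1, p.2.1), fun h => p.2.2 h.symm⟩
  left_inv _ := rfl
  right_inv _ := rfl

theorem isRegularOfDegree_multipartite (a b : ℕ) [(multipartite a b).LocallyFinite] :
    (multipartite a b).IsRegularOfDegree (a * (b - 1)) := by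
  intro x
  rw [← card_neighborSet_eq_degree, Fintype.card_congr (multipartiteNeighborSetEquiv a b x),
    Fintype.card_prod, Fintype.card_fin, Fintype.card_subtype_compl, Fintype.card_subtype_eq,
    Fintype.card_fin]

theorem stmt16 (t : ℕ) (ht : 1 ≤ t) (a b : Fin t → ℕ)
    (hb : ∀ i, 2 ≤ b i) :
    (IRNum (prodMultipartite t a b) : ℝ) ≤
      ((b ⟨0, by omega⟩ : ℝ) / (2 * (b ⟨0, by omega⟩ : ℝ) - 1)) *
        ∏ i, ((a i : ℝ) * b i) := by
  classical
  have : Nonempty (Fin t) := ⟨⟨0, ht⟩⟩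
  obtain ⟨d, hd, hG⟩ : ∃ d, 0 < d ∧ (prodMultipartite t a b).IsRegularOfDegree d := by
    rcases isEmpty_or_nonempty (∀ i, Fin (a i) × Fin (b i)) with hV | ⟨⟨v⟩⟩
    · exact ⟨1, one_pos, .of_isEmpty⟩
    · refine ⟨_, prod_pos fun i _ => Nat.mul_pos (v i).1.pos (by have := hb i; omega),
        isRegularOfDegree_tensorPi fun i => isRegularOfDegree_multipartite (a i) (b i)⟩
  have hIR : (2 * IRNum (prodMultipartite t a b) : ℝ) ≤ ∏ i, ((a i : ℝ) * b i) := by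
    have := two_mul_IRNum_le_card hG hd
    simp only [Fintype.card_pi, Fintype.card_prod, Fintype.card_fin] at this
    exact_mod_cast this
  have hb₀ : (2 : ℝ) ≤ b ⟨0, by omega⟩ := by exact_mod_cast hb _
  rw [div_mul_eq_mul_div, le_div_iff₀ (by linarith)]
  nlinarith
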